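/- arXiv:2412.17500 — 2 statements merged into one kernel-verified Lean document; each statement's English description precedes it below -/
import Mathlib

section
/- For every integer n ≥ 4, every tournament on n+1 vertices contains a copy of CP(2,2;n−4). -/
/-- A tournament: an irreflexive relation such that for any two distinct
vertices exactly one of the two possible arcs is present. -/
def IsTournament {V : Type*} (r : V → V → Prop) : Prop :=
  (∀ x, ¬ r x x) ∧ ∀ x y, x ≠ y → (r x y ↔ ¬ r y x)

/-- `Contains r e` : the digraph `r` contains a copy of the oriented graph `e`. -/
def Contains {V : Type*} {H : Type*} (r : V → V → Prop) (e : H → H → Prop) : Prop :=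
  ∃ φ : H → V, Function.Injective φ ∧ ∀ u v, e u v → r (φ u) (φ v)

/-- The antidirected cycle `AC_{2k}` on `ZMod (2k)`: the arcs go from each
even vertex `u` to its two neighbours `u + 1` and `u - 1` on the cycle. -/
def acArc (k : ℕ) (u v : ZMod (2 * k)) : Prop :=
  (∃ j : ZMod (2 * k), u = 2 * j) ∧ (v = u + 1 ∨ v = u - 1)

/-- `CP(2,2;ℓ)`: the oriented graph on `ℓ + 4` vertices (0-indexed; vertex
`v_i` of the paper is index `i - 1`) with arcs
`(0,1), (0,2), (1,3), (2,3)` and `(j, j+1)` for `3 ≤ j`. In particular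
`cpArc 0` is the oriented 4-cycle `C(2,2)`. -/
def cpArc (ℓ : ℕ) (u v : Fin (ℓ + 4)) : Prop :=
  (u.val = 0 ∧ v.val = 1) ∨ (u.val = 0 ∧ v.val = 2) ∨
  (u.val = 1 ∧ v.val = 3) ∨ (u.val = 2 ∧ v.val = 3) ∨
  (3 ≤ u.val ∧ v.val = u.val + 1)

/-!
Grow, one vertex at a time, a path `w₀ → w₁ → w₂ → ⋯` with the extra chords `w₀ → w₂` and
`w₁ → w₃`, starting from a transitive triple. A new vertex `v` that is dominated by some vertex
from `w₃` on is inserted into that tail as in Rédei's theorem. Otherwise `v → w₃`, and `v` fits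
into the head `w₀ w₁ w₂ w₃` unless its arcs to `w₀, w₁, w₂` alternate in direction. If two
outside vertices both alternate, an explicit rearrangement uses both and drops `w₁` or `w₂`.
So as long as two vertices lie outside the path it can be lengthened, and a tournament on
`n + 1` vertices has such a path on `n` vertices, which contains `CP(2,2;n-4)`.
-/

variable {V : Type*} {r : V → V → Prop}

namespace IsTournament

theorem rel_of_not_rel (ht : IsTournament r) {x y : V} (hxy : x ≠ y) (h : ¬ r x y) : r y x :=
  (ht.2 y x hxy.symm).2 h

theorem rel_or_rel (ht : IsTournament r) {x y : V} (hxy : x ≠ y) : r x y ∨ r y x :=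
  (em (r x y)).imp_right (ht.rel_of_not_rel hxy)

theorem exists_perm_cons_isChain (ht : IsTournament r) {v : V} :
    ∀ {t : List V}, t.IsChain r → v ∉ t → (∃ z ∈ t, r z v) →
      ∃ m : List V, m.IsChain r ∧ m.Perm (v :: t) ∧ m.head? = t.head?
  | [], _, _, ⟨_, hz, _⟩ => absurd hz List.not_mem_nil
  | x :: s, hchain, hv, hz => by
    rw [List.isChain_cons] at hchain
    by_cases hins : r x v ∧ ∀ y ∈ s.head?, r v y
    · exact ⟨x :: v :: s,
        List.isChain_cons_cons.2 ⟨hins.1, List.isChain_cons.2 ⟨hins.2, hchain.2⟩⟩,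
        List.Perm.swap v x s, rfl⟩
    have hzs : ∃ z ∈ s, r z v := by
      by_cases hxv : r x v
      · obtain ⟨y, hy, hvy⟩ : ∃ y ∈ s.head?, ¬ r v y := by simpa [hxv] using hins
        have hys : y ∈ s := List.mem_of_mem_head? hy
        exact ⟨y, hys, ht.rel_of_not_rel (fun h => hv (h ▸ List.mem_cons_of_mem x hys)) hvy⟩
      · obtain ⟨z, hz, hzv⟩ := hz
        exact ⟨z, (List.mem_cons.1 hz).resolve_left (by rintro rfl; exact hxv hzv), hzv⟩
    obtain ⟨m, hm, hperm, hhead⟩ :=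
      exists_perm_cons_isChain ht hchain.2 (fun h => hv (List.mem_cons_of_mem x h)) hzs
    exact ⟨x :: m, List.isChain_cons.2 ⟨hhead ▸ hchain.1, hm⟩,
      (hperm.cons x).trans (List.Perm.swap v x s), rfl⟩

end IsTournament

/-- A path `w₀ → w₁ → w₂ → ⋯` with the chords `w₀ → w₂` and `w₁ → w₃`; forgetting the arc
`w₁ → w₂` leaves a copy of `CP(2,2;ℓ)`. -/
def IsChordedPath (r : V → V → Prop) : List V → Prop
  | a :: b :: c :: t => (a :: b :: c :: t).IsChain r ∧ r a c ∧ ∀ d ∈ t.head?, r b d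
  | _ => False

def AlternatesOn (r : V → V → Prop) (v a b c : V) : Prop :=
  (r v a ∧ r b v ∧ r v c) ∨ (r a v ∧ r v b ∧ r c v)

section ChordedPath

variable {a b c v y : V} {t : List V}

theorem isChordedPath_iff :
    IsChordedPath r (a :: b :: c :: t) ↔
      r a b ∧ r b c ∧ (c :: t).IsChain r ∧ r a c ∧ ∀ d ∈ t.head?, r b d := by
  simp only [IsChordedPath, List.isChain_cons_cons, and_assoc]

theorem IsChordedPath.exists_perm_cons_of_rel_tail (ht : IsTournament r)
    (hl : IsChordedPath r (a :: b :: c :: t)) (hv : v ∉ t) (hz : ∃ z ∈ t, r z v) :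
    ∃ l, IsChordedPath r l ∧ l.Perm (v :: a :: b :: c :: t) := by
  obtain ⟨hab, hbc, hct, hac, hbd⟩ := isChordedPath_iff.1 hl
  rw [List.isChain_cons] at hct
  obtain ⟨m, hm, hperm, hhead⟩ := ht.exists_perm_cons_isChain hct.2 hv hz
  refine ⟨a :: b :: c :: m, isChordedPath_iff.2 ⟨hab, hbc, ?_, hac, hhead ▸ hbd⟩, ?_⟩
  · exact List.isChain_cons.2 ⟨hhead ▸ hct.1, hm⟩
  · exact (((hperm.cons c).cons b).cons a).trans (List.perm_middle (l₁ := [a, b, c]))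

theorem IsChordedPath.exists_perm_cons_or_alternatesOn_of_rel_head (ht : IsTournament r)
    (hl : IsChordedPath r (a :: b :: c :: t)) (hva : v ≠ a) (hvb : v ≠ b) (hvc : v ≠ c)
    (hvd : ∀ d ∈ t.head?, r v d) :
    (∃ l, IsChordedPath r l ∧ l.Perm (v :: a :: b :: c :: t)) ∨ AlternatesOn r v a b c := by
  obtain ⟨hab, hbc, hct, hac, hbd⟩ := isChordedPath_iff.1 hl
  have htail := (List.isChain_cons.1 hct).2
  rcases ht.rel_or_rel hvb with hvb | hbv
  · rcases ht.rel_or_rel hva with hva | hav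
    · exact .inl ⟨v :: a :: b :: c :: t,
        isChordedPath_iff.2 ⟨hva, hab, List.isChain_cons_cons.2 ⟨hbc, hct⟩, hvb, by simpa⟩,
        .refl _⟩
    rcases ht.rel_or_rel hvc with hvc | hcv
    · exact .inl ⟨a :: v :: b :: c :: t,
        isChordedPath_iff.2 ⟨hav, hvb, List.isChain_cons_cons.2 ⟨hbc, hct⟩, hab, by simpa⟩,
        List.perm_middle (l₁ := [a])⟩
    · exact .inr (.inr ⟨hav, hvb, hcv⟩)
  rcases ht.rel_or_rel hvc with hvc | hcv
  · rcases ht.rel_or_rel hva with hva | hav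
    · exact .inr (.inl ⟨hva, hbv, hvc⟩)
    · exact .inl ⟨a :: b :: v :: c :: t,
        isChordedPath_iff.2 ⟨hab, hbv, List.isChain_cons_cons.2 ⟨hvc, hct⟩, hav, by simpa⟩,
        List.perm_middle (l₁ := [a, b])⟩
  · exact .inl ⟨a :: b :: c :: v :: t,
      isChordedPath_iff.2 ⟨hab, hbc,
        List.isChain_cons_cons.2 ⟨hcv, List.isChain_cons.2 ⟨hvd, htail⟩⟩, hac, by simpa⟩,
      List.perm_middle (l₁ := [a, b, c])⟩

theorem IsChordedPath.exists_of_alternatesOn (hl : IsChordedPath r (a :: b :: c :: t))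
    (hnd : (a :: b :: c :: t).Nodup) (hv : v ∉ a :: b :: c :: t) (hy : y ∉ a :: b :: c :: t)
    (hvy : v ≠ y) (hrvy : r v y) (hyd : ∀ d ∈ t.head?, r y d)
    (hva : AlternatesOn r v a b c) (hya : AlternatesOn r y a b c) :
    ∃ l, IsChordedPath r l ∧ l.Nodup ∧ l.length = (a :: b :: c :: t).length + 1 := by
  obtain ⟨hab, hbc, hct, hac, hbd⟩ := isChordedPath_iff.1 hl
  have hbt : (b :: t).IsChain r := List.isChain_cons.2 ⟨hbd, (List.isChain_cons.1 hct).2⟩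
  have hyt : (y :: t).IsChain r := List.isChain_cons.2 ⟨hyd, (List.isChain_cons.1 hct).2⟩
  rcases hva with ⟨hva, hbv, hvc⟩ | ⟨hav, hvb, hcv⟩ <;>
    rcases hya with ⟨hya, hby, hyc⟩ | ⟨hay, hyb, hcy⟩
  · exact ⟨v :: y :: a :: c :: t, isChordedPath_iff.2
      ⟨hrvy, hya, List.isChain_cons_cons.2 ⟨hac, hct⟩, hva, by simpa⟩, by grind, rfl⟩
  · exact ⟨v :: a :: y :: b :: t, isChordedPath_iff.2
      ⟨hva, hay, List.isChain_cons_cons.2 ⟨hyb, hbt⟩, hrvy, by simpa⟩, by grind, rfl⟩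
  · exact ⟨a :: v :: b :: y :: t, isChordedPath_iff.2
      ⟨hav, hvb, List.isChain_cons_cons.2 ⟨hby, hyt⟩, hab, by simpa⟩, by grind, rfl⟩
  · exact ⟨a :: v :: y :: b :: t, isChordedPath_iff.2
      ⟨hav, hrvy, List.isChain_cons_cons.2 ⟨hyb, hbt⟩, hay, by simpa⟩, by grind, rfl⟩

theorem IsChordedPath.exists_perm_cons_or_alternatesOn (ht : IsTournament r)
    (hl : IsChordedPath r (a :: b :: c :: t)) (hv : v ∉ a :: b :: c :: t) :
    (∃ l, IsChordedPath r l ∧ l.Perm (v :: a :: b :: c :: t)) ∨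
      (∀ d ∈ t.head?, r v d) ∧ AlternatesOn r v a b c := by
  simp only [List.mem_cons, not_or] at hv
  obtain ⟨hva, hvb, hvc, hvt⟩ := hv
  by_cases hz : ∃ z ∈ t, r z v
  · exact .inl (hl.exists_perm_cons_of_rel_tail ht hvt hz)
  have hvd : ∀ d ∈ t.head?, r v d := fun d hd =>
    have hdt := List.mem_of_mem_head? hd
    ht.rel_of_not_rel (fun h => hvt (h ▸ hdt)) fun h => hz ⟨d, hdt, h⟩
  exact (hl.exists_perm_cons_or_alternatesOn_of_rel_head ht hva hvb hvc hvd).imp_right (⟨hvd, ·⟩)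

end ChordedPath

theorem IsChordedPath.exists_extend (ht : IsTournament r) {l : List V} (hl : IsChordedPath r l)
    (hnd : l.Nodup) {v y : V} (hv : v ∉ l) (hy : y ∉ l) (hvy : v ≠ y) :
    ∃ l', IsChordedPath r l' ∧ l'.Nodup ∧ l'.length = l.length + 1 := by
  match l, hl with
  | a :: b :: c :: t, hl =>
  have of_perm : ∀ {u}, u ∉ a :: b :: c :: t →
      (∃ l', IsChordedPath r l' ∧ l'.Perm (u :: a :: b :: c :: t)) →
      ∃ l', IsChordedPath r l' ∧ l'.Nodup ∧ l'.length = (a :: b :: c :: t).length + 1 :=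
    fun hu ⟨l', hl', hperm⟩ => ⟨l', hl', hperm.nodup_iff.2 (hnd.cons hu), hperm.length_eq⟩
  rcases hl.exists_perm_cons_or_alternatesOn ht hv with hext | ⟨hvd, hva⟩
  · exact of_perm hv hext
  rcases hl.exists_perm_cons_or_alternatesOn ht hy with hext | ⟨hyd, hya⟩
  · exact of_perm hy hext
  rcases ht.rel_or_rel hvy with hvy' | hyv
  · exact hl.exists_of_alternatesOn hnd hv hy hvy hvy' hyd hva hya
  · exact hl.exists_of_alternatesOn hnd hy hv hvy.symm hyv hvd hya hva

theorem IsTournament.exists_isChordedPath_length_three [Fintype V] (ht : IsTournament r)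
    (hV : 4 ≤ Fintype.card V) : ∃ l, IsChordedPath r l ∧ l.Nodup ∧ l.length = 3 := by
  have ne_of_rel {x y : V} (h : r x y) : x ≠ y := by rintro rfl; exact ht.1 x h
  have transitive {x y z : V} (hxy : r x y) (hyz : r y z) (hxz : r x z) :
      ∃ l, IsChordedPath r l ∧ l.Nodup ∧ l.length = 3 :=
    ⟨[x, y, z], by simp [IsChordedPath, hxy, hyz, hxz],
      by simp [ne_of_rel hxy, ne_of_rel hyz, ne_of_rel hxz], rfl⟩
  have two_out {w x y : V} (hxy : x ≠ y) (hx : r w x) (hy : r w y) :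
      ∃ l, IsChordedPath r l ∧ l.Nodup ∧ l.length = 3 :=
    (ht.rel_or_rel hxy).elim (transitive hx · hy) (transitive hy · hx)
  have two_in {w x y : V} (hxy : x ≠ y) (hx : r x w) (hy : r y w) :
      ∃ l, IsChordedPath r l ∧ l.Nodup ∧ l.length = 3 :=
    (ht.rel_or_rel hxy).elim (transitive · hy hx) (transitive · hx hy)
  obtain ⟨f, hf⟩ : ∃ f : Fin 4 → V, f.Injective :=
    ⟨_, ((Fin.castLEEmb hV).trans (Fintype.equivFin V).symm.toEmbedding).injective⟩
  have hne {i j : Fin 4} (hij : i ≠ j) : f i ≠ f j := hf.ne hij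
  -- Pigeonhole: two of the three arcs at `f 0` point the same way.
  rcases ht.rel_or_rel (hne (i := 0) (j := 1) (by decide)) with h1 | h1 <;>
    rcases ht.rel_or_rel (hne (i := 0) (j := 2) (by decide)) with h2 | h2 <;>
    rcases ht.rel_or_rel (hne (i := 0) (j := 3) (by decide)) with h3 | h3
  exacts [two_out (hne (by decide)) h1 h2, two_out (hne (by decide)) h1 h2,
    two_out (hne (by decide)) h1 h3, two_in (hne (by decide)) h2 h3,
    two_out (hne (by decide)) h2 h3, two_in (hne (by decide)) h1 h3,
    two_in (hne (by decide)) h1 h2, two_in (hne (by decide)) h1 h2]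

theorem IsTournament.exists_isChordedPath_length [Fintype V] (ht : IsTournament r) {k : ℕ}
    (hk : 3 ≤ k) (hV : k + 1 ≤ Fintype.card V) :
    ∃ l, IsChordedPath r l ∧ l.Nodup ∧ l.length = k := by
  classical
  induction k, hk using Nat.le_induction with
  | base => exact ht.exists_isChordedPath_length_three hV
  | succ k hk ih =>
    obtain ⟨l, hl, hnd, rfl⟩ := ih (by omega)
    have hout : 1 < l.toFinsetᶜ.card := by
      rw [Finset.card_compl, List.toFinset_card_of_nodup hnd]
      omega
    obtain ⟨v, hv, y, hy, hvy⟩ := Finset.one_lt_card.1 hout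
    simp only [Finset.mem_compl, List.mem_toFinset] at hv hy
    exact hl.exists_extend ht hnd hv hy hvy

theorem IsChordedPath.contains_cpArc {l : List V} (hl : IsChordedPath r l) (hnd : l.Nodup)
    {ℓ : ℕ} (hlen : l.length = ℓ + 4) : Contains r (cpArc ℓ) := by
  match l, hl with
  | a :: b :: c :: t, hl =>
  have hchain := List.isChain_iff_getElem.1 hl.1
  refine ⟨fun i => (a :: b :: c :: t)[i.val], ?_, ?_⟩
  · exact fun i j hij => Fin.ext (hnd.getElem_inj_iff.1 hij)
  rintro ⟨i, hi⟩ ⟨j, hj⟩ hij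
  simp only [cpArc] at hij
  rcases hij with ⟨rfl, rfl⟩ | ⟨rfl, rfl⟩ | ⟨rfl, rfl⟩ | ⟨rfl, rfl⟩ | ⟨-, rfl⟩
  · exact hchain 0 (by omega)
  · exact hl.2.1
  · exact hl.2.2 _ (by simp [List.head?_eq_getElem?])
  · exact hchain 2 (by omega)
  · exact hchain i (by omega)

/-- For `n ≥ 4`, every tournament on `n + 1` vertices contains a copy of
`CP(2,2; n-4)`. -/
theorem tournament_contains_cp (n : ℕ) (hn : 4 ≤ n)
    (V : Type) (_ : Fintype V) (r : V → V → Prop) (ht : IsTournament r)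
    (hcard : Fintype.card V = n + 1) : Contains r (cpArc (n - 4)) := by
  obtain ⟨l, hl, hnd, hlen⟩ := ht.exists_isChordedPath_length (k := n) (by omega) (by omega)
  exact hl.contains_cpArc hnd (by omega)
end

section
/- Let n ≥ 5 and let T be a tournament on n+1 vertices containing no copy of CP(2,2;n−4). Suppose v_1,…,v_{n−1} are distinct vertices of T such that (v_1,v_2),(v_1,v_3),(v_2,v_3),(v_2,v_4),(v_3,v_4) and (v_i,v_{i+1}) for 4 ≤ i ≤ n−2 are all arcs of T, and let v be any of the two vertices of T not among v_1,…,v_{n−1}. Then: if (v_1,v) is an arc of T then (v_3,v) is an arc of T, and if (v,v_1) is an arc of T then (v_2,v) is an arc of T. -/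
open Function

section

variable {V : Type*} {r : V → V → Prop}

theorem IsTournament.rel_of_not_rel_s14 (ht : IsTournament r) {x y : V} (hxy : x ≠ y)
    (h : ¬ r x y) : r y x :=
  (ht.2 y x hxy.symm).2 h

theorem contains_cpArc_of_cons_cons {ℓ : ℕ} {a b : V} {q : Fin (ℓ + 2) → V}
    (hinj : Injective (Fin.cons a (Fin.cons b q) : Fin (ℓ + 4) → V))
    (hab : r a b) (haq : r a (q 0)) (hbq : r b (q 1))
    (hq : ∀ i : Fin (ℓ + 1), r (q i.castSucc) (q i.succ)) :
    Contains r (cpArc ℓ) := by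
  refine ⟨_, hinj, ?_⟩
  rintro ⟨a, ha⟩ ⟨b, hb⟩ harc
  simp only [cpArc] at harc
  rcases harc with ⟨rfl, rfl⟩ | ⟨rfl, rfl⟩ | ⟨rfl, rfl⟩ | ⟨rfl, rfl⟩ | ⟨h3, rfl⟩
  · exact hab
  · exact haq
  · exact hbq
  · exact hq 0
  · obtain ⟨j, rfl⟩ : ∃ j, a = j + 3 := ⟨a - 3, by omega⟩
    exact hq ⟨j + 1, by omega⟩

theorem injective_cons_cons_tail {n : ℕ} {u : Fin (n + 1) → V} {v : V}
    (hu : Injective u) (hv : v ∉ Set.range u) :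
    Injective (Fin.cons (u 0) (Fin.cons v (Fin.tail u)) : Fin (n + 2) → V) := by
  refine Fin.cons_injective_of_injective ?_ (Fin.cons_injective_of_injective ?_ ?_)
  · rw [Fin.range_cons, Set.mem_insert_iff, not_or]
    exact ⟨fun h => hv ⟨0, h⟩, fun ⟨i, hi⟩ => Fin.succ_ne_zero i (hu hi)⟩
  · exact fun ⟨i, hi⟩ => hv ⟨_, hi⟩
  · exact hu.comp (Fin.succ_injective _)

end

/-- Claim 3 in the proof of Theorem 3: let `n ≥ 5` and let `T` be a tournament
on `n + 1` vertices with no copy of `CP(2,2; n-4)`. Suppose the distinct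
vertices `w 0, …, w (n-2)` (the paper's `v_1, …, v_{n-1}`) form a copy of
`CP(2,2; n-5)` together with the extra arc `(v_2, v_3)`, and `v` is not among
them. Then: if `v_1` dominates `v` then so does `v_3`, and if `v` dominates
`v_1` then `v_2` dominates `v`. -/
theorem claim_v1_v2_v3 (n : ℕ) (hn : 5 ≤ n)
    (V : Type) (r : V → V → Prop) (ht : IsTournament r)
    (hno : ¬ Contains r (cpArc (n - 4)))
    (w : Fin (n - 1) → V) (hinj : Function.Injective w)
    (h01 : r (w ⟨0, by omega⟩) (w ⟨1, by omega⟩))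
    (h02 : r (w ⟨0, by omega⟩) (w ⟨2, by omega⟩))
    (h12 : r (w ⟨1, by omega⟩) (w ⟨2, by omega⟩))
    (h23 : r (w ⟨2, by omega⟩) (w ⟨3, by omega⟩))
    (hpath : ∀ i : Fin (n - 1), ∀ h : i.val + 1 < n - 1, 3 ≤ i.val →
      r (w i) (w ⟨i.val + 1, h⟩))
    (v : V) (hv : v ∉ Set.range w) :
    (r (w ⟨0, by omega⟩) v → r (w ⟨2, by omega⟩) v) ∧
    (r v (w ⟨0, by omega⟩) → r (w ⟨1, by omega⟩) v) := by
  set ℓ := n - 4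
  -- `n - 1 = ℓ + 3` holds only propositionally; reindexing lets the copies be built by `Fin.cons`.
  let u : Fin (ℓ + 3) → V := fun i => w ⟨i, by omega⟩
  have hu : Injective u := fun i j h => Fin.ext (by simpa [u] using congrArg Fin.val (hinj h))
  have hvu : v ∉ Set.range u := fun ⟨i, hi⟩ => hv ⟨_, hi⟩
  have hv_ne : ∀ i, v ≠ u i := fun i h => hvu ⟨i, h.symm⟩
  have hq : ∀ i : Fin (ℓ + 1), r (Fin.tail u i.castSucc) (Fin.tail u i.succ) := by
    rintro ⟨i, hi⟩
    rcases i with _ | _ | i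
    · exact h12
    · exact h23
    · exact hpath ⟨i + 3, by omega⟩ (by dsimp only; omega) (by dsimp only; omega)
  constructor
  · intro h0v
    by_contra h2v
    exact hno (contains_cpArc_of_cons_cons (injective_cons_cons_tail hu hvu) h0v h01
      (ht.rel_of_not_rel_s14 (hv_ne 2).symm h2v) hq)
  · intro hv0
    by_contra h1v
    have hinj' : Injective (Fin.cons v (Fin.cons (u 0) (Fin.tail u)) : Fin (ℓ + 4) → V) := by
      rw [Fin.cons_self_tail]
      exact Fin.cons_injective_of_injective hvu hu
    exact hno (contains_cpArc_of_cons_cons hinj' hv0 (ht.rel_of_not_rel_s14 (hv_ne 1).symm h1v) h02 hq)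
end
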